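/- Let {x_k}, {z_k} be generated by the mirror descent iteration z_{k+1} = z_k − σ s ∇f(x_k), x_{k+1} = ∇φ*(z_{k+1}), with initialization ∇φ*(z₀) = x₀, and define the discrete Lyapunov function E(k) = kσs[f(x_k) − f(x*)] + D_{φ*}(z_k, z*). Then for every k ≥ 0 and every step size s > 0, E(k+1) − E(k) ≤ (−k − 1/2 + (k+1)Ls/2) σ ‖x_{k+1} − x_k‖². -/

import Mathlib

/-!
Put `g = ∇f(x_k)`, so that `z_{k+1} - z_k = -σs g`, and let `D` be the Bregman divergence of `φ*`.
The three-point identity turns `D(z_{k+1}, z*) - D(z_k, z*)` into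
`D(z_{k+1}, z_k) + σs⟪g, x* - x_k⟫`, while
`D(z_{k+1}, z_k) + D(z_k, z_{k+1}) = -σs⟪g, x_{k+1} - x_k⟫`.
Since `∇φ*(z)` maximises `⟪z, ·⟫ - φ`, strong convexity of `φ` gives
`D(a, b) ≥ σ/2 ‖∇φ*(a) - ∇φ*(b)‖²`; applied to both divergences this bounds `D(z_{k+1}, z_k)` and
shows `σs⟪g, x_{k+1} - x_k⟫ ≤ -σ‖x_{k+1} - x_k‖²`. The function values are then handled by the
gradient inequality of the convex `f` at `x_k` and the descent lemma for the `L`-smooth `f`.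
-/

open Set Filter Topology
open scoped RealInnerProductSpace

/-- The Fenchel conjugate of a function on Euclidean space. -/
noncomputable def fenchelConj {n : ℕ} (φ : EuclideanSpace ℝ (Fin n) → ℝ)
    (z : EuclideanSpace ℝ (Fin n)) : ℝ :=
  ⨆ x : EuclideanSpace ℝ (Fin n), (⟪z, x⟫ - φ x)

section Gradient

variable {E : Type*} [NormedAddCommGroup E] [InnerProductSpace ℝ E] [CompleteSpace E]
  {f : E → ℝ} {f' : E → E}

theorem HasGradientAt.hasDerivAt_comp_lineMap {x y : E} {t : ℝ} {g : E}
    (hf : HasGradientAt f g (AffineMap.lineMap x y t)) :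
    HasDerivAt (fun t => f (AffineMap.lineMap x y t)) ⟪g, y - x⟫ t :=
  hf.hasFDerivAt.comp_hasDerivAt t AffineMap.hasDerivAt_lineMap

theorem ConvexOn.add_inner_le_of_hasGradientAt (hf : ConvexOn ℝ univ f) {x g : E}
    (hg : HasGradientAt f g x) (y : E) : f x + ⟪g, y - x⟫ ≤ f y := by
  have hline : ConvexOn ℝ univ (fun t : ℝ => f (AffineMap.lineMap x y t)) :=
    hf.comp_affineMap (AffineMap.lineMap x y)
  have hderiv := hline.le_slope_of_hasDerivAt (mem_univ 0) (mem_univ 1) one_pos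
    (HasGradientAt.hasDerivAt_comp_lineMap (by rwa [AffineMap.lineMap_apply_zero]))
  rw [slope_def_field, AffineMap.lineMap_apply_zero, AffineMap.lineMap_apply_one] at hderiv
  linarith

theorem le_add_inner_add_of_lipschitz_gradient {L : ℝ} (hf : ∀ x, HasGradientAt f (f' x) x)
    (hL : ∀ x y, ‖f' x - f' y‖ ≤ L * ‖x - y‖) (x y : E) :
    f y ≤ f x + ⟪f' x, y - x⟫ + L / 2 * ‖y - x‖ ^ 2 := by
  set d := y - x
  let h : ℝ → ℝ := fun t => f (AffineMap.lineMap x y t) - t * ⟪f' x, d⟫ - L * ‖d‖ ^ 2 * t ^ 2 / 2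
  have hderiv : ∀ t, HasDerivAt h
      (⟪f' (AffineMap.lineMap x y t) - f' x, d⟫ - L * ‖d‖ ^ 2 * t) t := by
    intro t
    have := (((hf (AffineMap.lineMap x y t)).hasDerivAt_comp_lineMap).sub
      ((hasDerivAt_id t).mul_const ⟪f' x, d⟫)).sub
      (((hasDerivAt_pow 2 t).const_mul (L * ‖d‖ ^ 2)).div_const 2)
    refine this.congr_deriv ?_
    rw [inner_sub_left]
    ring
  have hanti : AntitoneOn h (Icc 0 1) := by
    refine antitoneOn_of_hasDerivWithinAt_nonpos (convex_Icc 0 1)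
      (HasDerivAt.continuousOn fun t _ => hderiv t) (fun t _ => (hderiv t).hasDerivWithinAt) ?_
    intro t ht
    rw [interior_Icc] at ht
    obtain ⟨ht0, -⟩ := ht
    have hdist : ‖AffineMap.lineMap x y t - x‖ = t * ‖d‖ := by
      rw [AffineMap.lineMap_apply_module', add_sub_cancel_right, norm_smul,
        Real.norm_of_nonneg (by linarith)]
    calc ⟪f' (AffineMap.lineMap x y t) - f' x, d⟫ - L * ‖d‖ ^ 2 * t
        ≤ ‖f' (AffineMap.lineMap x y t) - f' x‖ * ‖d‖ - L * ‖d‖ ^ 2 * t := by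
          gcongr; exact real_inner_le_norm _ _
      _ ≤ L * (t * ‖d‖) * ‖d‖ - L * ‖d‖ ^ 2 * t := by
          gcongr; rw [← hdist]; exact hL _ _
      _ = 0 := by ring
  have h10 : h 1 ≤ h 0 :=
    hanti (left_mem_Icc.2 zero_le_one) (right_mem_Icc.2 zero_le_one) zero_le_one
  simp only [h, AffineMap.lineMap_apply_zero, AffineMap.lineMap_apply_one] at h10
  linarith

theorem hasGradientAt_of_le_of_le_add_sq {F : E → ℝ} {g c : E} (K : ℝ)
    (hlow : ∀ d, F c + ⟪g, d - c⟫ ≤ F d) (hup : ∀ d, F d ≤ F c + ⟪g, d - c⟫ + K * ‖d - c‖ ^ 2) :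
    HasGradientAt F g c := by
  rw [hasGradientAt_iff_isLittleO]
  refine (Asymptotics.IsBigO.of_bound K (Eventually.of_forall fun d => ?_)).trans_isLittleO
    (Asymptotics.isLittleO_pow_sub_sub c one_lt_two)
  rw [Real.norm_eq_abs, norm_pow, norm_norm, abs_le]
  constructor <;> linarith [hlow d, hup d, mul_nonneg (abs_nonneg K) (sq_nonneg ‖d - c‖),
    le_abs_self K]

end Gradient

section StrongConvex

variable {E : Type*} [NormedAddCommGroup E] [InnerProductSpace ℝ E] {φ : E → ℝ} {σ : ℝ}

theorem StrongConvexOn.sub_inner (hφ : StrongConvexOn univ σ φ) (a : E) :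
    StrongConvexOn univ σ (fun y => φ y - ⟪a, y⟫) := by
  refine ⟨convex_univ, fun x _ y _ s t hs ht hst => ?_⟩
  have := hφ.2 (mem_univ x) (mem_univ y) hs ht hst
  simp only [smul_eq_mul, inner_add_right, real_inner_smul_right] at this ⊢
  linarith

theorem StrongConvexOn.add_inner_add_le_of_isMinOn (hφ : StrongConvexOn univ σ φ) {a u : E}
    (hu : IsMinOn (fun y => φ y - ⟪a, y⟫) univ u) (x : E) :
    φ u + ⟪a, x - u⟫ + σ / 2 * ‖x - u‖ ^ 2 ≤ φ x := by
  have hconv : ∀ t ∈ Ioo (0 : ℝ) 1,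
      (1 - t) * (σ / 2 * ‖x - u‖ ^ 2) ≤ φ x - φ u - ⟪a, x - u⟫ := by
    rintro t ⟨ht0, ht1⟩
    have hsc := hφ.2 (mem_univ x) (mem_univ u) ht0.le (sub_nonneg.2 ht1.le) (by ring)
    have hmin := hu (mem_univ (t • x + (1 - t) • u))
    simp only [mem_ofPred_eq, smul_eq_mul, inner_add_right, real_inner_smul_right,
      inner_sub_right] at hsc hmin ⊢
    refine le_of_mul_le_mul_left ?_ ht0
    linarith
  have hlim : Tendsto (fun t : ℝ => (1 - t) * (σ / 2 * ‖x - u‖ ^ 2)) (𝓝[>] 0)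
      (𝓝 (σ / 2 * ‖x - u‖ ^ 2)) :=
    (Continuous.tendsto' (by fun_prop) 0 _ (by simp)).mono_left nhdsWithin_le_nhds
  have := le_of_tendsto hlim (eventually_of_mem (Ioo_mem_nhdsGT one_pos) hconv)
  linarith

theorem StrongConvexOn.exists_isMinOn [FiniteDimensional ℝ E] (hσ : 0 < σ)
    (hφ : StrongConvexOn univ σ φ) : ∃ u, IsMinOn φ univ u := by
  have hcont : Continuous φ :=
    continuousOn_univ.1 ((hφ.convexOn fun r => by positivity).continuousOn isOpen_univ)
  obtain ⟨C, hC⟩ := (isCompact_sphere (0 : E) 1).exists_bound_of_continuousOn hcont.continuousOn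
  -- If `φ y ≤ φ 0`, strong convexity on the segment `[0, y]` gives
  -- `-C ≤ φ (‖y‖⁻¹ • y) ≤ φ 0 - σ / 2 * (‖y‖ - 1)`.
  have hbdd : Bornology.IsBounded {y | φ y ≤ φ 0} := by
    refine (Metric.isBounded_iff_subset_closedBall 0).2
      ⟨max 1 (1 + 2 * (φ 0 + C) / σ), fun y hy => ?_⟩
    rw [mem_ofPred_eq] at hy
    rw [Metric.mem_closedBall, dist_zero_right]
    by_contra! hr
    have hr1 : 1 < ‖y‖ := (le_max_left _ _).trans_lt hr
    have hsc := hφ.2 (mem_univ y) (mem_univ 0) (inv_nonneg.2 (norm_nonneg y))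
      (sub_nonneg.2 (inv_le_one_of_one_le₀ hr1.le)) (add_sub_cancel _ _)
    have hunit : ‖y‖⁻¹ • y ∈ Metric.sphere (0 : E) 1 := by
      rw [mem_sphere_zero_iff_norm, norm_smul, norm_inv, norm_norm, inv_mul_cancel₀ (by positivity)]
    have hcoef : ‖y‖⁻¹ * (1 - ‖y‖⁻¹) * (σ / 2 * ‖y‖ ^ 2) = σ / 2 * (‖y‖ - 1) := by
      field_simp
    simp only [smul_zero, add_zero, sub_zero, smul_eq_mul] at hsc
    rw [hcoef] at hsc
    have hdrop : ‖y‖⁻¹ * φ y ≤ ‖y‖⁻¹ * φ 0 := mul_le_mul_of_nonneg_left hy (by positivity)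
    have hbound : ‖y‖ - 1 ≤ 2 * (φ 0 + C) / σ := by
      rw [le_div_iff₀ hσ]; linarith [neg_le_of_abs_le (hC _ hunit)]
    linarith [le_max_right 1 (1 + 2 * (φ 0 + C) / σ)]
  obtain ⟨u, hu⟩ := hcont.exists_forall_le_of_isBounded 0 hbdd
  exact ⟨u, fun y _ => hu y⟩

end StrongConvex

section Bregman

variable {E : Type*} [NormedAddCommGroup E] [InnerProductSpace ℝ E]

/-- `D_F(y, x)`, with `G` in the role of `∇F`. -/
def bregmanDiv (F : E → ℝ) (G : E → E) (y x : E) : ℝ :=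
  F y - F x - ⟪G x, y - x⟫

variable (F : E → ℝ) (G : E → E)

theorem bregmanDiv_sub_bregmanDiv (y x w : E) :
    bregmanDiv F G y w - bregmanDiv F G x w = bregmanDiv F G y x + ⟪G x - G w, y - x⟫ := by
  simp only [bregmanDiv, inner_sub_left, inner_sub_right]
  ring

theorem bregmanDiv_add_bregmanDiv_swap (y x : E) :
    bregmanDiv F G y x + bregmanDiv F G x y = ⟪G y - G x, y - x⟫ := by
  simp only [bregmanDiv, inner_sub_left, inner_sub_right]
  ring

variable {F G} {σ η : ℝ} {z z' g : E}

theorem inner_le_neg_sq_of_mirror_step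
    (hD : ∀ a b, σ / 2 * ‖G a - G b‖ ^ 2 ≤ bregmanDiv F G a b) (hstep : z' = z - η • g) :
    η * ⟪g, G z' - G z⟫ ≤ -(σ * ‖G z' - G z‖ ^ 2) := by
  subst hstep
  have hswap := bregmanDiv_add_bregmanDiv_swap F G (z - η • g) z
  have h₁ := hD (z - η • g) z
  have h₂ := hD z (z - η • g)
  rw [norm_sub_rev] at h₂
  rw [sub_sub_cancel_left, inner_neg_right, real_inner_smul_right, real_inner_comm] at hswap
  linarith

theorem bregmanDiv_sub_bregmanDiv_le_of_mirror_step
    (hD : ∀ a b, σ / 2 * ‖G a - G b‖ ^ 2 ≤ bregmanDiv F G a b) (hstep : z' = z - η • g) (w : E) :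
    bregmanDiv F G z' w - bregmanDiv F G z w ≤
      η * ⟪g, G w - G z⟫ - η * ⟪g, G z' - G z⟫ - σ / 2 * ‖G z' - G z‖ ^ 2 := by
  subst hstep
  have hthree := bregmanDiv_sub_bregmanDiv F G (z - η • g) z w
  have hswap := bregmanDiv_add_bregmanDiv_swap F G (z - η • g) z
  have h₂ := hD z (z - η • g)
  rw [norm_sub_rev] at h₂
  rw [sub_sub_cancel_left, inner_neg_right, real_inner_smul_right] at hthree hswap
  simp only [inner_sub_right, real_inner_comm g] at hthree hswap ⊢
  linarith

end Bregman

section FenchelConj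

variable {n : ℕ} {φ : EuclideanSpace ℝ (Fin n) → ℝ} {σ : ℝ} {c u : EuclideanSpace ℝ (Fin n)}

theorem fenchelConj_eq_of_isMinOn (hu : IsMinOn (fun y => φ y - ⟪c, y⟫) univ u) :
    fenchelConj φ c = ⟪c, u⟫ - φ u := by
  have hle : ∀ y, ⟪c, y⟫ - φ y ≤ ⟪c, u⟫ - φ u := fun y => by
    have := hu (mem_univ y)
    rw [mem_ofPred_eq] at this
    linarith
  exact le_antisymm (ciSup_le hle) (le_ciSup ⟨_, forall_mem_range.2 hle⟩ u)

namespace StrongConvexOn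

theorem inner_sub_le_fenchelConj (hσ : 0 < σ) (hφ : StrongConvexOn univ σ φ)
    (d y : EuclideanSpace ℝ (Fin n)) :
    ⟪d, y⟫ - φ y ≤ fenchelConj φ d := by
  obtain ⟨v, hv⟩ := (hφ.sub_inner d).exists_isMinOn hσ
  rw [fenchelConj_eq_of_isMinOn hv]
  have := hv (mem_univ y)
  rw [mem_ofPred_eq] at this
  linarith

theorem fenchelConj_le_add_inner_add_sq (hσ : 0 < σ) (hφ : StrongConvexOn univ σ φ)
    (hu : IsMinOn (fun y => φ y - ⟪c, y⟫) univ u) (d : EuclideanSpace ℝ (Fin n)) :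
    fenchelConj φ d ≤ fenchelConj φ c + ⟪u, d - c⟫ + 1 / (2 * σ) * ‖d - c‖ ^ 2 := by
  rw [fenchelConj_eq_of_isMinOn hu]
  refine ciSup_le fun y => ?_
  have hsub := hφ.add_inner_add_le_of_isMinOn hu y
  have hyoung : ⟪d - c, y - u⟫ ≤ σ / 2 * ‖y - u‖ ^ 2 + 1 / (2 * σ) * ‖d - c‖ ^ 2 := by
    have hsq : 0 ≤ (σ * ‖y - u‖ - ‖d - c‖) ^ 2 / (2 * σ) := by positivity
    have hexpand : (σ * ‖y - u‖ - ‖d - c‖) ^ 2 / (2 * σ) =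
        σ / 2 * ‖y - u‖ ^ 2 + 1 / (2 * σ) * ‖d - c‖ ^ 2 - ‖d - c‖ * ‖y - u‖ := by
      field_simp; ring
    linarith [real_inner_le_norm (d - c) (y - u)]
  simp only [inner_sub_left, inner_sub_right, real_inner_comm u] at hsub hyoung ⊢
  linarith

theorem hasGradientAt_fenchelConj (hσ : 0 < σ) (hφ : StrongConvexOn univ σ φ)
    (hu : IsMinOn (fun y => φ y - ⟪c, y⟫) univ u) : HasGradientAt (fenchelConj φ) u c := by
  refine hasGradientAt_of_le_of_le_add_sq (1 / (2 * σ)) (fun d => ?_)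
    (hφ.fenchelConj_le_add_inner_add_sq hσ hu)
  have := hφ.inner_sub_le_fenchelConj hσ d u
  rw [fenchelConj_eq_of_isMinOn hu]
  simp only [inner_sub_right, real_inner_comm u] at this ⊢
  linarith

theorem isMinOn_of_hasGradientAt_fenchelConj (hσ : 0 < σ) (hφ : StrongConvexOn univ σ φ)
    {g : EuclideanSpace ℝ (Fin n)} (hg : HasGradientAt (fenchelConj φ) g c) :
    IsMinOn (fun y => φ y - ⟪c, y⟫) univ g := by
  obtain ⟨u, hu⟩ := (hφ.sub_inner c).exists_isMinOn hσ
  rwa [hg.unique (hφ.hasGradientAt_fenchelConj hσ hu)]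

theorem sq_norm_sub_le_bregmanDiv_fenchelConj (hσ : 0 < σ) (hφ : StrongConvexOn univ σ φ)
    {G : EuclideanSpace ℝ (Fin n) → EuclideanSpace ℝ (Fin n)}
    (hG : ∀ z, HasGradientAt (fenchelConj φ) (G z) z) (a b : EuclideanSpace ℝ (Fin n)) :
    σ / 2 * ‖G a - G b‖ ^ 2 ≤ bregmanDiv (fenchelConj φ) G a b := by
  have ha := hφ.isMinOn_of_hasGradientAt_fenchelConj hσ (hG a)
  have hb := hφ.isMinOn_of_hasGradientAt_fenchelConj hσ (hG b)
  have hsub := hφ.add_inner_add_le_of_isMinOn ha (G b)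
  rw [bregmanDiv, fenchelConj_eq_of_isMinOn ha, fenchelConj_eq_of_isMinOn hb, norm_sub_rev]
  simp only [inner_sub_right, real_inner_comm (G b)] at hsub ⊢
  linarith

end StrongConvexOn

end FenchelConj

theorem mirror_descent_lyapunov_difference_general
{n : ℕ} (f φ : EuclideanSpace ℝ (Fin n) → ℝ)
    (f' gφs : EuclideanSpace ℝ (Fin n) → EuclideanSpace ℝ (Fin n))
    (σ L s : ℝ) (hσ : 0 < σ)
    -- f is convex and differentiable with L-Lipschitz gradient
    (hfconv : ConvexOn ℝ Set.univ f)
    (hfd : ∀ x, HasGradientAt f (f' x) x)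
    (hfL : ∀ x y, ‖f' x - f' y‖ ≤ L * ‖x - y‖)
    -- φ is σ-strongly convex
    (hφsc : StrongConvexOn Set.univ σ φ)
    -- φ* is differentiable with gradient gφs
    (hgφs : ∀ z, HasGradientAt (fenchelConj φ) (gφs z) z)
    -- the mirror descent iteration
    (x z : ℕ → EuclideanSpace ℝ (Fin n))
    (hz : ∀ k : ℕ, z (k + 1) = z k - (σ * s) • f' (x k))
    (hx : ∀ k : ℕ, x (k + 1) = gφs (z (k + 1)))
    (hx0 : gφs (z 0) = x 0)
    -- x* is a global minimizer of f and ∇φ*(z*) = x*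
    (xs zs : EuclideanSpace ℝ (Fin n))
    (hzs : gφs zs = xs)
    (hs : 0 < s) :
    ∀ k : ℕ,
      (((k : ℝ) + 1) * σ * s * (f (x (k + 1)) - f xs) +
          (fenchelConj φ (z (k + 1)) - fenchelConj φ zs - ⟪gφs zs, z (k + 1) - zs⟫)) -
        ((k : ℝ) * σ * s * (f (x k) - f xs) +
          (fenchelConj φ (z k) - fenchelConj φ zs - ⟪gφs zs, z k - zs⟫))
        ≤ (-(k : ℝ) - 1 / 2 + ((k : ℝ) + 1) * L * s / 2) * σ * ‖x (k + 1) - x k‖ ^ 2 := by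
  intro k
  have hxk : gφs (z k) = x k := by
    cases k with
    | zero => exact hx0
    | succ m => exact (hx m).symm
  have hD := hφsc.sq_norm_sub_le_bregmanDiv_fenchelConj hσ hgφs
  have hbregman := bregmanDiv_sub_bregmanDiv_le_of_mirror_step hD (hz k) zs
  have hmono := inner_le_neg_sq_of_mirror_step hD (hz k)
  rw [hzs] at hbregman
  rw [hxk, ← hx k] at hbregman hmono
  have hdescent := le_add_inner_add_of_lipschitz_gradient hfd hfL (x k) (x (k + 1))
  have hconv := hfconv.add_inner_le_of_hasGradientAt (hfd (x k)) xs
  have hk : (0 : ℝ) ≤ k := k.cast_nonneg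
  have hσs : 0 ≤ σ * s := (mul_pos hσ hs).le
  unfold bregmanDiv at hbregman
  linarith [mul_le_mul_of_nonneg_left hdescent (mul_nonneg (by positivity : (0:ℝ) ≤ k + 1) hσs),
    mul_le_mul_of_nonneg_left hconv hσs, mul_le_mul_of_nonneg_left hmono hk]

/-- The discrete Lyapunov function `E(k) = kσs[f(x_k) − f(x*)] + D_{φ*}(z_k, z*)` of mirror
descent satisfies `E(k+1) − E(k) ≤ (−k − 1/2 + (k+1)Ls/2)σ‖x_{k+1} − x_k‖²` for every step
size `s > 0`. -/
theorem mirror_descent_lyapunov_difference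
{n : ℕ} (f φ : EuclideanSpace ℝ (Fin n) → ℝ)
    (f' gφs : EuclideanSpace ℝ (Fin n) → EuclideanSpace ℝ (Fin n))
    (σ L s : ℝ) (hσ : 0 < σ)
    -- f is convex and differentiable with L-Lipschitz gradient
    (hfconv : ConvexOn ℝ Set.univ f)
    (hfd : ∀ x, HasGradientAt f (f' x) x)
    (hfL : ∀ x y, ‖f' x - f' y‖ ≤ L * ‖x - y‖)
    -- φ is σ-strongly convex
    (hφsc : StrongConvexOn Set.univ σ φ)
    -- φ* is differentiable with gradient gφs
    (hgφs : ∀ z, HasGradientAt (fenchelConj φ) (gφs z) z)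
    -- the mirror descent iteration
    (x z : ℕ → EuclideanSpace ℝ (Fin n))
    (hz : ∀ k : ℕ, z (k + 1) = z k - (σ * s) • f' (x k))
    (hx : ∀ k : ℕ, x (k + 1) = gφs (z (k + 1)))
    (hx0 : gφs (z 0) = x 0)
    -- x* is a global minimizer of f and ∇φ*(z*) = x*
    (xs zs : EuclideanSpace ℝ (Fin n))
    (hxs : ∀ w, f xs ≤ f w) (hzs : gφs zs = xs)
    (hs : 0 < s) :
    ∀ k : ℕ,
      (((k : ℝ) + 1) * σ * s * (f (x (k + 1)) - f xs) +
          (fenchelConj φ (z (k + 1)) - fenchelConj φ zs - ⟪gφs zs, z (k + 1) - zs⟫)) -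
        ((k : ℝ) * σ * s * (f (x k) - f xs) +
          (fenchelConj φ (z k) - fenchelConj φ zs - ⟪gφs zs, z k - zs⟫))
        ≤ (-(k : ℝ) - 1 / 2 + ((k : ℝ) + 1) * L * s / 2) * σ * ‖x (k + 1) - x k‖ ^ 2 :=
  mirror_descent_lyapunov_difference_general f φ f' gφs σ L s hσ hfconv hfd hfL hφsc hgφs x z hz hx
    hx0 xs zs hzs hs
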